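/- Let V : ℂ^d → ℂ^D be an isometry with d ≥ 2, and fix the orthonormal encoded basis |i⟩ := V ẽ_i, 0 ≤ i < d, where (ẽ_i) is the standard basis of ℂ^d. Let ℰ(ρ) = Σ_a E_a ρ E_aᴴ be a channel given by a Kraus family (E_a), and suppose there exists a recovery channel R (given by some Kraus family) such that ‖R(ℰ(ρ)) − ρ‖₁ ≤ ε̃ for every density operator ρ supported on the range of V. For a fixed index i, set ρ_{i,⊥} = (d−1)^{−1} Σ_{j≠i} |j⟩⟨j|, let M_i = ℰ(|i⟩⟨i| − ρ_{i,⊥}) (a Hermitian traceless matrix), and let P_i be the orthogonal projection onto the direct sum of eigenspaces of M_i with positive eigenvalue. Then for every Kraus operator E_a, ‖E_a|i⟩ − P_i E_a|i⟩‖² ≤ ε̃, where ‖·‖ is the Euclidean norm on ℂ^D. -/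

import Mathlib

open Matrix
open scoped ComplexOrder

/-- The trace norm `‖A‖₁ = Tr √(AᴴA)` of a complex square matrix. -/
noncomputable def traceNorm {n : Type*} [Fintype n] [DecidableEq n] (A : Matrix n n ℂ) : ℝ :=
  ((Matrix.posSemidef_conjTranspose_mul_self A).1.eigenvectorUnitary.1 *
    Matrix.diagonal ((fun x : ℝ => (x : ℂ)) ∘ (Real.sqrt ·) ∘ (Matrix.posSemidef_conjTranspose_mul_self A).1.eigenvalues) *
    (star (Matrix.posSemidef_conjTranspose_mul_self A).1.eigenvectorUnitary : Matrix n n ℂ)).trace.re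

/-- A density operator: positive semidefinite with unit trace. -/
def IsDensity {n : Type*} [Fintype n] (ρ : Matrix n n ℂ) : Prop :=
  ρ.PosSemidef ∧ ρ.trace = 1

/-- Apply the channel with Kraus family `K`: `ρ ↦ Σ_a K_a ρ K_aᴴ`. -/
noncomputable def applyKraus {ι n n' : Type*} [Fintype ι] [Fintype n] [Fintype n']
    (K : ι → Matrix n' n ℂ) (ρ : Matrix n n ℂ) : Matrix n' n' ℂ :=
  ∑ a, K a * ρ * (K a)ᴴ

/-- The Euclidean norm of a complex vector. -/
noncomputable def evecNorm {n : Type*} [Fintype n] (v : n → ℂ) : ℝ :=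
  Real.sqrt (∑ i, Complex.normSq (v i))

/-- The orthogonal projection onto the direct sum of the eigenspaces of a Hermitian
matrix `M` with positive eigenvalue. -/
noncomputable def posProj {n : Type*} [Fintype n] [DecidableEq n] {M : Matrix n n ℂ}
    (hM : M.IsHermitian) : Matrix n n ℂ :=
  (hM.eigenvectorUnitary : Matrix n n ℂ) *
    Matrix.diagonal (fun i => if 0 < hM.eigenvalues i then (1 : ℂ) else 0) *
    (hM.eigenvectorUnitary : Matrix n n ℂ)ᴴ

/-- The encoded basis vector `|i⟩ = V ẽ_i`. -/
noncomputable def ket {d D : ℕ} (V : Matrix (Fin D) (Fin d) ℂ) (i : Fin d) : Fin D → ℂ :=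
  V *ᵥ Pi.single i 1

/-- The rank-one projector `|i⟩⟨i|` onto the encoded basis vector. -/
noncomputable def ketbra {d D : ℕ} (V : Matrix (Fin D) (Fin d) ℂ) (i : Fin d) :
    Matrix (Fin D) (Fin D) ℂ :=
  Matrix.vecMulVec (ket V i) (star (ket V i))

/-- The state `ρ_{i,⊥} = (d−1)⁻¹ Σ_{j ≠ i} |j⟩⟨j|`. -/
noncomputable def rhoPerp {d D : ℕ} (V : Matrix (Fin D) (Fin d) ℂ) (i : Fin d) :
    Matrix (Fin D) (Fin D) ℂ :=
  ((d : ℂ) - 1)⁻¹ • ∑ j ∈ Finset.univ.erase i, ketbra V j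

/-!
Write `ρᵢ = |i⟩⟨i|` and `ρ⊥ = ρ_{i,⊥}`. These are orthogonal states, so `‖ρᵢ - ρ⊥‖₁ = 2`; since
`R ∘ ℰ` restores both up to `ε̃` and channels contract the trace norm, `‖Mᵢ‖₁ ≥ 2 - 2ε̃`. By
Holevo–Helstrom `Tr (Pᵢ Mᵢ) = ‖Mᵢ‖₁ / 2 ≥ 1 - ε̃`, and as `Tr (Pᵢ ℰ(ρ⊥)) ≥ 0` also
`Tr (Pᵢ ℰ(ρᵢ)) ≥ 1 - ε̃`. Hence `∑ₐ ‖(1 - Pᵢ) Eₐ|i⟩‖² = Tr ((1 - Pᵢ) ℰ(ρᵢ)) ≤ ε̃`.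

The trace-norm facts all come from the duality `‖M‖₁ = max {Re Tr (C M) : -1 ≤ C ≤ 1}` for
Hermitian `M`, the maximum being attained at `C = 2P - 1` with `P` the positive-part projection.
-/

open scoped MatrixOrder

variable {n m : Type*} [Fintype n] [Fintype m]

section TraceNorm

variable [DecidableEq n]

lemma re_trace_mul_nonneg {A B : Matrix n n ℂ} (hA : 0 ≤ A) (hB : 0 ≤ B) :
    0 ≤ (A * B).trace.re := by
  have hconj : 0 ≤ CFC.sqrt A * B * CFC.sqrt A :=
    (CFC.sqrt_nonneg A).isSelfAdjoint.conjugate_nonneg hB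
  have htrace : (CFC.sqrt A * B * CFC.sqrt A).trace = (A * B).trace := by
    rw [trace_mul_cycle, CFC.sqrt_mul_sqrt_self A hA]
  rw [← htrace]
  exact (Complex.nonneg_iff.1 (Matrix.nonneg_iff_posSemidef.1 hconj).trace_nonneg).1

lemma continuousOn_spectrum (f : ℝ → ℝ) (A : Matrix n n ℂ) : ContinuousOn f (spectrum ℝ A) :=
  A.finite_real_spectrum.continuousOn f

lemma traceNorm_eq_re_trace_abs (A : Matrix n n ℂ) : traceNorm A = (CFC.abs A).trace.re := by
  have hAA : 0 ≤ Aᴴ * A := (posSemidef_conjTranspose_mul_self A).nonneg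
  rw [CFC.abs, star_eq_conjTranspose, CFC.sqrt_eq_real_sqrt _ hAA, cfcₙ_eq_cfc,
    (posSemidef_conjTranspose_mul_self A).1.cfc_eq]
  rfl

lemma traceNorm_neg (A : Matrix n n ℂ) : traceNorm (-A) = traceNorm A := by
  rw [traceNorm_eq_re_trace_abs, traceNorm_eq_re_trace_abs, CFC.abs_neg]

lemma Matrix.IsHermitian.traceNorm_eq {M : Matrix n n ℂ} (hM : M.IsHermitian) :
    traceNorm M = M⁺.trace.re + M⁻.trace.re := by
  rw [traceNorm_eq_re_trace_abs, ← CFC.posPart_add_negPart M hM, trace_add, Complex.add_re]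

lemma re_trace_mul_le_traceNorm {M C : Matrix n n ℂ} (hM : M.IsHermitian)
    (hC₁ : -1 ≤ C) (hC₂ : C ≤ 1) : (C * M).trace.re ≤ traceNorm M := by
  have hpos := re_trace_mul_nonneg (sub_nonneg.2 hC₂) (CFC.posPart_nonneg M)
  have hneg := re_trace_mul_nonneg (neg_le_iff_add_nonneg'.1 hC₁) (CFC.negPart_nonneg M)
  rw [hM.traceNorm_eq]
  nth_rw 1 [← CFC.posPart_sub_negPart M hM]
  simp only [sub_mul, add_mul, one_mul, mul_sub, trace_sub, trace_add, Complex.sub_re,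
    Complex.add_re] at hpos hneg ⊢
  linarith

lemma traceNorm_sub_of_mul_eq_zero {A B : Matrix n n ℂ} (hA : 0 ≤ A) (hB : 0 ≤ B)
    (hAB : A * B = 0) : traceNorm (A - B) = A.trace.re + B.trace.re := by
  obtain ⟨hpos, hneg⟩ := CFC.posPart_negPart_unique rfl hAB hA hB
  rw [(hA.isSelfAdjoint.sub hB.isSelfAdjoint).isHermitian.traceNorm_eq, hpos, hneg]

section PosProj

variable {M : Matrix n n ℂ} (hM : M.IsHermitian)
include hM

lemma posProj_eq_cfc : posProj hM = cfc (fun x : ℝ => if 0 < x then 1 else 0) M := by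
  rw [hM.cfc_eq, IsHermitian.cfc, Unitary.conjStarAlgAut_apply, posProj, star_eq_conjTranspose]
  congr 3
  ext i
  split_ifs <;> simp [*]

lemma isStarProjection_posProj : IsStarProjection (posProj hM) where
  isIdempotentElem := by
    rw [IsIdempotentElem, posProj_eq_cfc hM,
      ← cfc_mul _ _ M (continuousOn_spectrum _ M) (continuousOn_spectrum _ M)]
    exact cfc_congr fun x _ => by split_ifs <;> norm_num
  isSelfAdjoint := by
    rw [posProj_eq_cfc hM]
    exact cfc_predicate _ M

lemma posProj_mul_self : posProj hM * M = M⁺ := by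
  nth_rw 2 [← cfc_id' ℝ M]
  rw [posProj_eq_cfc hM, ← cfc_mul _ _ M (continuousOn_spectrum _ M), CFC.posPart_def,
    cfcₙ_eq_cfc]
  refine cfc_congr fun x _ => ?_
  split_ifs with h
  · simp [h.le]
  · simp [not_lt.1 h]

lemma re_trace_two_posProj_sub_one_mul :
    ((2 • posProj hM - 1) * M).trace.re = traceNorm M := by
  rw [sub_mul, smul_mul_assoc, posProj_mul_self hM, one_mul, ← CFC.abs_add_self M hM,
    add_sub_cancel_right, traceNorm_eq_re_trace_abs]

lemma re_trace_posProj_mul_of_trace_eq_zero (htr : M.trace = 0) :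
    (posProj hM * M).trace.re = traceNorm M / 2 := by
  have hsplit := congrArg (fun A => A.trace.re) (CFC.posPart_sub_negPart M hM)
  simp only [trace_sub, Complex.sub_re, htr, Complex.zero_re] at hsplit
  rw [posProj_mul_self hM, hM.traceNorm_eq]
  linarith

end PosProj

lemma exists_re_trace_mul_eq_traceNorm {M : Matrix n n ℂ} (hM : M.IsHermitian) :
    ∃ C : Matrix n n ℂ, -1 ≤ C ∧ C ≤ 1 ∧ (C * M).trace.re = traceNorm M := by
  refine ⟨2 • posProj hM - 1, ?_, ?_, re_trace_two_posProj_sub_one_mul hM⟩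
  · have hP := (isStarProjection_posProj hM).nonneg
    simpa [two_smul] using sub_le_sub_right (add_nonneg hP hP) 1
  · have hP := (isStarProjection_posProj hM).le_one
    rw [two_smul, sub_le_iff_le_add]
    exact add_le_add hP hP

lemma traceNorm_add_le {A B : Matrix n n ℂ} (hA : A.IsHermitian) (hB : B.IsHermitian) :
    traceNorm (A + B) ≤ traceNorm A + traceNorm B := by
  obtain ⟨C, hC₁, hC₂, hC⟩ := exists_re_trace_mul_eq_traceNorm (hA.add hB)
  rw [← hC, mul_add, trace_add, Complex.add_re]
  exact add_le_add (re_trace_mul_le_traceNorm hA hC₁ hC₂) (re_trace_mul_le_traceNorm hB hC₁ hC₂)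

end TraceNorm

section Kraus

variable {ι : Type*} [Fintype ι] (K : ι → Matrix m n ℂ)

lemma applyKraus_sub (A B : Matrix n n ℂ) :
    applyKraus K (A - B) = applyKraus K A - applyKraus K B := by
  simp only [applyKraus, Matrix.mul_sub, Matrix.sub_mul, Finset.sum_sub_distrib]

lemma applyKraus_neg (A : Matrix n n ℂ) : applyKraus K (-A) = -applyKraus K A := by
  simp only [applyKraus, Matrix.mul_neg, Matrix.neg_mul, Finset.sum_neg_distrib]

lemma applyKraus_nonneg {ρ : Matrix n n ℂ} (hρ : 0 ≤ ρ) : 0 ≤ applyKraus K ρ :=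
  nonneg_iff_posSemidef.2 <| posSemidef_sum _ fun a _ =>
    (nonneg_iff_posSemidef.1 hρ).mul_mul_conjTranspose_same (K a)

lemma applyKraus_mono {A B : Matrix n n ℂ} (h : A ≤ B) : applyKraus K A ≤ applyKraus K B := by
  rw [← sub_nonneg, ← applyKraus_sub]
  exact applyKraus_nonneg K (sub_nonneg.2 h)

lemma Matrix.IsHermitian.applyKraus {ρ : Matrix n n ℂ} (hρ : ρ.IsHermitian) :
    (applyKraus K ρ).IsHermitian :=
  isSelfAdjoint_sum _ fun a _ => isHermitian_mul_mul_conjTranspose (K a) hρ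

lemma trace_mul_applyKraus (C : Matrix m m ℂ) (X : Matrix n n ℂ) :
    (C * applyKraus K X).trace = (applyKraus (fun a => (K a)ᴴ) C * X).trace := by
  simp only [applyKraus, Matrix.mul_sum, Matrix.sum_mul, trace_sum, conjTranspose_conjTranspose]
  refine Finset.sum_congr rfl fun a _ => ?_
  rw [← Matrix.mul_assoc, ← Matrix.mul_assoc, trace_mul_cycle, ← Matrix.mul_assoc]

variable [DecidableEq n]

lemma trace_applyKraus (hK : ∑ a, (K a)ᴴ * K a = 1) (ρ : Matrix n n ℂ) :
    (applyKraus K ρ).trace = ρ.trace := by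
  simp_rw [applyKraus, trace_sum, trace_mul_cycle (K _), ← trace_sum, ← Finset.sum_mul, hK,
    Matrix.one_mul]

variable [DecidableEq m]

lemma applyKraus_conjTranspose_one (hK : ∑ a, (K a)ᴴ * K a = 1) :
    applyKraus (fun a => (K a)ᴴ) 1 = 1 := by
  simpa [applyKraus] using hK

/-- Contractivity in trace norm, by duality: the dual channel is positive and unital, so it maps
the dual ball `-1 ≤ C ≤ 1` into itself. -/
lemma traceNorm_applyKraus_le (hK : ∑ a, (K a)ᴴ * K a = 1) {X : Matrix n n ℂ}
    (hX : X.IsHermitian) : traceNorm (applyKraus K X) ≤ traceNorm X := by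
  obtain ⟨C, hC₁, hC₂, hC⟩ := exists_re_trace_mul_eq_traceNorm (hX.applyKraus K)
  have hdual₁ := applyKraus_mono (fun a => (K a)ᴴ) hC₁
  have hdual₂ := applyKraus_mono (fun a => (K a)ᴴ) hC₂
  rw [applyKraus_neg, applyKraus_conjTranspose_one K hK] at hdual₁
  rw [applyKraus_conjTranspose_one K hK] at hdual₂
  rw [← hC, trace_mul_applyKraus]
  exact re_trace_mul_le_traceNorm hX hdual₁ hdual₂

end Kraus

section Recovery

variable [DecidableEq n] [DecidableEq m]

lemma traceNorm_sub_le {A B : Matrix n n ℂ} (hA : A.IsHermitian) (hB : B.IsHermitian) :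
    traceNorm (A - B) ≤ traceNorm A + traceNorm B := by
  simpa only [sub_eq_add_neg, traceNorm_neg] using traceNorm_add_le hA hB.neg

lemma traceNorm_sub_le_of_recovery {ι κ : Type*} [Fintype ι] [Fintype κ]
    (E : ι → Matrix m n ℂ) (R : κ → Matrix n m ℂ) (hR : ∑ k, (R k)ᴴ * R k = 1)
    {ρ σ : Matrix n n ℂ} (hρ : ρ.IsHermitian) (hσ : σ.IsHermitian) {ε : ℝ}
    (hρε : traceNorm (applyKraus R (applyKraus E ρ) - ρ) ≤ ε)
    (hσε : traceNorm (applyKraus R (applyKraus E σ) - σ) ≤ ε) :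
    traceNorm (ρ - σ) ≤ traceNorm (applyKraus E (ρ - σ)) + 2 * ε := by
  have hRE {X : Matrix n n ℂ} (hX : X.IsHermitian) :
      (applyKraus R (applyKraus E X) - X).IsHermitian :=
    ((hX.applyKraus E).applyKraus R).sub hX
  have hdecomp : ρ - σ = applyKraus R (applyKraus E (ρ - σ)) -
      ((applyKraus R (applyKraus E ρ) - ρ) - (applyKraus R (applyKraus E σ) - σ)) := by
    rw [applyKraus_sub, applyKraus_sub]
    abel
  have hcontract := traceNorm_applyKraus_le R hR ((hρ.sub hσ).applyKraus E)
  have herr := traceNorm_sub_le (hRE hρ) (hRE hσ)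
  have htri := traceNorm_sub_le (((hρ.sub hσ).applyKraus E).applyKraus R)
    ((hRE hρ).sub (hRE hσ))
  rw [← hdecomp] at htri
  linarith

lemma one_sub_le_re_trace_posProj_mul_applyKraus {ι κ : Type*} [Fintype ι] [Fintype κ]
    {E : ι → Matrix m n ℂ} (hE : ∑ a, (E a)ᴴ * E a = 1) {R : κ → Matrix n m ℂ}
    (hR : ∑ k, (R k)ᴴ * R k = 1) {ρ σ : Matrix n n ℂ} (hρ : IsDensity ρ) (hσ : IsDensity σ)
    (hρσ : ρ * σ = 0) (hM : (applyKraus E (ρ - σ)).IsHermitian) {ε : ℝ}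
    (hρε : traceNorm (applyKraus R (applyKraus E ρ) - ρ) ≤ ε)
    (hσε : traceNorm (applyKraus R (applyKraus E σ) - σ) ≤ ε) :
    1 - ε ≤ (posProj hM * applyKraus E ρ).trace.re := by
  have hdist := traceNorm_sub_of_mul_eq_zero hρ.1.nonneg hσ.1.nonneg hρσ
  have hlarge := traceNorm_sub_le_of_recovery E R hR hρ.1.isHermitian hσ.1.isHermitian hρε hσε
  have hhalf := re_trace_posProj_mul_of_trace_eq_zero hM (by
    rw [trace_applyKraus E hE, trace_sub, hρ.2, hσ.2, sub_self])
  have hsplit : (posProj hM * applyKraus E (ρ - σ)).trace =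
      (posProj hM * applyKraus E ρ).trace - (posProj hM * applyKraus E σ).trace := by
    rw [← trace_sub, ← Matrix.mul_sub, ← applyKraus_sub]
  have hσ_pos := re_trace_mul_nonneg (isStarProjection_posProj hM).nonneg
    (applyKraus_nonneg E hσ.1.nonneg)
  rw [hsplit, Complex.sub_re] at hhalf
  rw [hρ.2, hσ.2, Complex.one_re] at hdist
  linarith

end Recovery

section Vectors

lemma evecNorm_sq (v : n → ℂ) : evecNorm v ^ 2 = (star v ⬝ᵥ v).re := by
  rw [evecNorm, Real.sq_sqrt (Finset.sum_nonneg fun i _ => Complex.normSq_nonneg _), dotProduct,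
    Complex.re_sum]
  simp [Complex.normSq_apply, mul_comm]

lemma evecNorm_mulVec_sq {Q : Matrix n n ℂ} (hQ : IsStarProjection Q) (v : n → ℂ) :
    evecNorm (Q *ᵥ v) ^ 2 = (star v ⬝ᵥ (Q *ᵥ v)).re := by
  rw [evecNorm_sq, star_mulVec, ← dotProduct_mulVec, mulVec_mulVec, ← star_eq_conjTranspose,
    hQ.isSelfAdjoint.star_eq, hQ.isIdempotentElem.eq]

lemma trace_mul_applyKraus_vecMulVec {ι : Type*} [Fintype ι] (K : ι → Matrix m n ℂ)
    (Q : Matrix m m ℂ) (ψ : n → ℂ) :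
    (Q * applyKraus K (vecMulVec ψ (star ψ))).trace =
      ∑ a, star (K a *ᵥ ψ) ⬝ᵥ (Q *ᵥ (K a *ᵥ ψ)) := by
  simp only [applyKraus, Matrix.mul_sum, trace_sum, mul_vecMulVec, vecMulVec_mul,
    trace_vecMulVec, star_mulVec, dotProduct_comm]

lemma evecNorm_mulVec_mulVec_sq_le {ι : Type*} [Fintype ι] (K : ι → Matrix m n ℂ)
    {Q : Matrix m m ℂ} (hQ : IsStarProjection Q) (ψ : n → ℂ) (a : ι) :
    evecNorm (Q *ᵥ (K a *ᵥ ψ)) ^ 2 ≤ (Q * applyKraus K (vecMulVec ψ (star ψ))).trace.re := by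
  rw [trace_mul_applyKraus_vecMulVec, Complex.re_sum]
  simp_rw [← evecNorm_mulVec_sq hQ]
  exact Finset.single_le_sum (fun b _ => sq_nonneg (evecNorm (Q *ᵥ (K b *ᵥ ψ))))
    (Finset.mem_univ a)

lemma evecNorm_sub_mulVec_sq_le [DecidableEq n] [DecidableEq m] {ι : Type*} [Fintype ι]
    {K : ι → Matrix m n ℂ} (hK : ∑ a, (K a)ᴴ * K a = 1) {P : Matrix m m ℂ}
    (hP : IsStarProjection P) {ψ : n → ℂ} (hψ : (vecMulVec ψ (star ψ)).trace = 1) (a : ι) :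
    evecNorm (K a *ᵥ ψ - P *ᵥ (K a *ᵥ ψ)) ^ 2 ≤
      1 - (P * applyKraus K (vecMulVec ψ (star ψ))).trace.re := by
  have hcompl : ((1 - P) * applyKraus K (vecMulVec ψ (star ψ))).trace.re =
      1 - (P * applyKraus K (vecMulVec ψ (star ψ))).trace.re := by
    rw [Matrix.sub_mul, Matrix.one_mul, trace_sub, trace_applyKraus K hK, hψ, Complex.sub_re,
      Complex.one_re]
  calc _ = evecNorm ((1 - P) *ᵥ (K a *ᵥ ψ)) ^ 2 := by rw [Matrix.sub_mulVec, Matrix.one_mulVec]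
    _ ≤ _ := evecNorm_mulVec_mulVec_sq_le K hP.one_sub ψ a
    _ = _ := hcompl

end Vectors

section EncodedBasis

variable {d D : ℕ} {V : Matrix (Fin D) (Fin d) ℂ}

lemma star_ket_dotProduct_ket (hV : Vᴴ * V = 1) (i j : Fin d) :
    star (ket V i) ⬝ᵥ ket V j = if i = j then 1 else 0 := by
  rw [ket, ket, star_mulVec, ← dotProduct_mulVec, mulVec_mulVec, hV, one_mulVec]
  simp [Pi.single_apply, eq_comm]

lemma ketbra_mul_ketbra_of_ne (hV : Vᴴ * V = 1) {i j : Fin d} (hij : i ≠ j) :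
    ketbra V i * ketbra V j = 0 := by
  rw [ketbra, ketbra, vecMulVec_mul_vecMulVec, star_ket_dotProduct_ket hV,
    if_neg hij, zero_smul, vecMulVec_zero]

lemma isDensity_ketbra (hV : Vᴴ * V = 1) (i : Fin d) : IsDensity (ketbra V i) :=
  ⟨posSemidef_vecMulVec_self_star _, by
    rw [ketbra, trace_vecMulVec, dotProduct_comm, star_ket_dotProduct_ket hV, if_pos rfl]⟩

lemma range_proj_mulVec_ket (hV : Vᴴ * V = 1) (i : Fin d) : (V * Vᴴ) *ᵥ ket V i = ket V i := by
  rw [ket, mulVec_mulVec, Matrix.mul_assoc, hV, Matrix.mul_one]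

lemma range_proj_mul_ketbra_mul_range_proj (hV : Vᴴ * V = 1) (i : Fin d) :
    (V * Vᴴ) * ketbra V i * (V * Vᴴ) = ketbra V i := by
  rw [ketbra, mul_vecMulVec, range_proj_mulVec_ket hV, vecMulVec_mul,
    ← (isHermitian_mul_conjTranspose_self V).eq, ← star_mulVec, range_proj_mulVec_ket hV]

lemma isDensity_rhoPerp (hd : 2 ≤ d) (hV : Vᴴ * V = 1) (i : Fin d) :
    IsDensity (rhoPerp V i) := by
  have hcard : ((d : ℂ) - 1) = ((d - 1 : ℕ) : ℂ) := by
    rw [Nat.cast_sub (by omega), Nat.cast_one]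
  refine ⟨(posSemidef_sum _ fun j _ => (isDensity_ketbra hV j).1).smul ?_, ?_⟩
  · rw [hcard]
    exact inv_nonneg.2 (Nat.cast_nonneg _)
  · rw [rhoPerp, trace_smul, trace_sum, Finset.sum_congr rfl fun j _ => (isDensity_ketbra hV j).2,
      Finset.sum_const, Finset.card_erase_of_mem (Finset.mem_univ i), Finset.card_univ,
      Fintype.card_fin, nsmul_one, ← hcard, smul_eq_mul]
    exact inv_mul_cancel₀ (hcard ▸ Nat.cast_ne_zero.2 (by omega))

lemma ketbra_mul_rhoPerp (hV : Vᴴ * V = 1) (i : Fin d) : ketbra V i * rhoPerp V i = 0 := by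
  rw [rhoPerp, Matrix.mul_smul, Matrix.mul_sum,
    Finset.sum_eq_zero fun j hj => ketbra_mul_ketbra_of_ne hV (Finset.ne_of_mem_erase hj).symm,
    smul_zero]

lemma range_proj_mul_rhoPerp_mul_range_proj (hV : Vᴴ * V = 1) (i : Fin d) :
    (V * Vᴴ) * rhoPerp V i * (V * Vᴴ) = rhoPerp V i := by
  simp only [rhoPerp, Matrix.mul_smul, Matrix.smul_mul, Matrix.mul_sum, Matrix.sum_mul,
    range_proj_mul_ketbra_mul_range_proj hV]

end EncodedBasis

/-- **Ghost projector lemma, part 1.** If the channel `ℰ` with Kraus family `(E_a)` is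
reversed on code states up to trace-norm error `ε̃` by a recovery channel `R`, and `P_i`
is the projection onto the positive eigenspace of `M_i = ℰ(|i⟩⟨i| − ρ_{i,⊥})`, then each
`E_a|i⟩` is nearly fixed by `P_i`: `‖E_a|i⟩ − P_i E_a|i⟩‖² ≤ ε̃`. -/
theorem ghost_projector_nearly_fixes
    (d D r r' : ℕ) (hd : 2 ≤ d)
    (V : Matrix (Fin D) (Fin d) ℂ) (hV : Vᴴ * V = 1)
    (E : Fin r → Matrix (Fin D) (Fin D) ℂ) (hE : ∑ a, (E a)ᴴ * E a = 1)
    (R : Fin r' → Matrix (Fin D) (Fin D) ℂ) (hR : ∑ k, (R k)ᴴ * R k = 1)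
    (εt : ℝ)
    (hrec : ∀ ρ : Matrix (Fin D) (Fin D) ℂ, IsDensity ρ →
      (V * Vᴴ) * ρ * (V * Vᴴ) = ρ →
      traceNorm (applyKraus R (applyKraus E ρ) - ρ) ≤ εt)
    (i : Fin d)
    (hM : (applyKraus E (ketbra V i - rhoPerp V i)).IsHermitian) :
    ∀ a : Fin r,
      (evecNorm (E a *ᵥ ket V i - posProj hM *ᵥ (E a *ᵥ ket V i))) ^ 2 ≤ εt := by
  intro a
  have hi := isDensity_ketbra hV i
  have hp := isDensity_rhoPerp hd hV i
  have hPi := one_sub_le_re_trace_posProj_mul_applyKraus hE hR hi hp (ketbra_mul_rhoPerp hV i) hM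
    (hrec _ hi (range_proj_mul_ketbra_mul_range_proj hV i))
    (hrec _ hp (range_proj_mul_rhoPerp_mul_range_proj hV i))
  calc _ ≤ 1 - (posProj hM * applyKraus E (ketbra V i)).trace.re :=
        evecNorm_sub_mulVec_sq_le hE (isStarProjection_posProj hM) hi.2 a
    _ ≤ εt := by linarith
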